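/- (Proposition 4, R² form.) In a pair-matching design, if Γ ≥ 1, for all distinct matched subjects i ≠ j with m(i) = m(j) one has 0 < P_i < 1, 0 < P_j < 1, and 1/Γ ≤ (P_i·(1−P_j))/(P_j·(1−P_i)) ≤ Γ, and Σ_{i=1}^n (y_C(i) − ȳ_C)² > 0, then ((E[τ̂_rebar] − τ_ETT)/SD(y_C))² ≤ (1 − R²_M) · 4·(√Γ − 1)/(√Γ + 1). -/

import Mathlib

open MeasureTheory Finset

noncomputable section

namespace Rebar

variable {n : ℕ} {S : Type*} [Fintype S] [DecidableEq S]

/-- The matched set with label `s`: subjects `i` with `m i = s`. -/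
def mSet (m : Fin n → S) (s : S) : Finset (Fin n) :=
  Finset.univ.filter fun i => m i = s

/-- Matched-set difference `t_s(v, z)` for a vector `v` and assignment `z`. -/
def tdiff (m : Fin n → S) (nT nC : S → ℕ) (v z : Fin n → ℝ) (s : S) : ℝ :=
  (1 / (nT s : ℝ)) * ∑ i ∈ mSet m s, v i * z i
    - (1 / (nC s : ℝ)) * ∑ i ∈ mSet m s, v i * (1 - z i)

/-- Total number treated, `n_T = Σ_s n_T(s)`. -/
def nTtot (nT : S → ℕ) : ℕ := ∑ s, nT s

/-- Matched-set weight `w_s = n_T(s)/n_T`. -/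
def w (nT : S → ℕ) (s : S) : ℝ := (nT s : ℝ) / (nTtot nT : ℝ)

/-- The matching estimator `τ̂_M(v) = Σ_s w_s t_s(v, z)`. -/
def tauM (m : Fin n → S) (nT nC : S → ℕ) (v z : Fin n → ℝ) : ℝ :=
  ∑ s, w nT s * tdiff m nT nC v z s

/-- Observed outcome `Y_i = Z_i y_T(i) + (1 - Z_i) y_C(i)`. -/
def Yobs (yT yC : Fin n → ℝ) (z : Fin n → ℝ) (i : Fin n) : ℝ :=
  z i * yT i + (1 - z i) * yC i

/-- Treatment-assignment probability `P_i = Pr(Z_i = 1)`. -/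
def Pr {Ω : Type*} [MeasurableSpace Ω] (μ : Measure Ω) (Z : Ω → Fin n → ℝ)
    (i : Fin n) : ℝ :=
  (μ {ω | Z ω i = 1}).toReal

/-- The estimand: expected effect of treatment on the treated,
`τ_ETT = (Σ_i τ_i P_i)/n_T`. -/
def tauETT {Ω : Type*} [MeasurableSpace Ω] (μ : Measure Ω) (Z : Ω → Fin n → ℝ)
    (yT yC : Fin n → ℝ) (nT : S → ℕ) : ℝ :=
  (∑ i, (yT i - yC i) * Pr μ Z i) / (nTtot nT : ℝ)

/-- The design constant `C(n, n_T, n_C)`. -/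
def Cdesign (n : ℕ) (nT nC : S → ℕ) : ℝ :=
  ((n : ℝ) / (nTtot nT : ℝ) ^ 2) *
    ∑ s, ((nT s : ℝ) + (nC s : ℝ)) * (max 1 ((nT s : ℝ) / (nC s : ℝ))) ^ 2

/-- Mean squared prediction error `MSE_M = (1/n) Σ_i (ŷ_C(i) - y_C(i))²`. -/
def MSE (yC yhat : Fin n → ℝ) : ℝ :=
  (1 / (n : ℝ)) * ∑ i, (yhat i - yC i) ^ 2

end Rebar

/-! In a pair-matching design with `K = |S| = n / 2` pairs the rebar estimator is
`(1/K) Σ_i (2 Z_i - 1)(Y_i - ŷ_C(i))`, so its bias for `τ_ETT` is `(1/K) Σ_i (2 P_i - 1) d_i`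
with `d = y_C - ŷ_C`. Within a pair `P_j = 1 - P_i`, so the odds-ratio bound reads
`(P_i / (1 - P_i))² ≤ Γ`; hence `|2 P_i - 1| ≤ λ := (√Γ - 1)/(√Γ + 1)`, and as also
`|2 P_i - 1| ≤ 1`, `(2 P_i - 1)² ≤ λ`. A pair thus contributes
`(2 P_i - 1)² (d_i - d_j)² ≤ 2λ (d_i² + d_j²)` to the squared bias, and Cauchy–Schwarz over
the `K` pairs gives `bias² ≤ 2λ Σ d_i² / K = 4λ Σ d_i² / n`; dividing by
`SD(y_C)² = Σ (y_C - ȳ_C)² / n` gives the claim. -/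

namespace Rebar

section ZeroOne

variable {Ω : Type*} {f : Ω → ℝ}

lemma eq_indicator_of_zero_or_one (hf : ∀ ω, f ω = 0 ∨ f ω = 1) :
    f = {ω | f ω = 1}.indicator 1 := by
  funext ω
  rcases hf ω with h | h <;> simp [Set.indicator, h]

variable [MeasurableSpace Ω] {μ : Measure Ω}

lemma integrable_of_zero_or_one [IsFiniteMeasure μ] (hfm : Measurable f)
    (hf : ∀ ω, f ω = 0 ∨ f ω = 1) : Integrable f μ := by
  rw [eq_indicator_of_zero_or_one hf]
  exact (integrable_const 1).indicator (hfm (measurableSet_singleton 1))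

lemma integral_of_zero_or_one (hfm : Measurable f) (hf : ∀ ω, f ω = 0 ∨ f ω = 1) :
    ∫ ω, f ω ∂μ = μ.real {ω | f ω = 1} := by
  conv_lhs => rw [eq_indicator_of_zero_or_one hf]
  exact integral_indicator_one (hfm (measurableSet_singleton 1))

end ZeroOne

variable {n : ℕ} {S : Type*} {m : Fin n → S} {nT nC : S → ℕ}

lemma w_of_pair [Fintype S] (hpair : ∀ s, nT s = 1 ∧ nC s = 1) (s : S) :
    w nT s = 1 / Fintype.card S := by
  simp [w, nTtot, hpair]

variable [DecidableEq S]

lemma sum_sum_mSet [Fintype S] (f : Fin n → ℝ) :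
    ∑ s, ∑ i ∈ mSet m s, f i = ∑ i, f i :=
  sum_fiberwise univ m f

lemma card_mSet_of_pair (hpair : ∀ s, nT s = 1 ∧ nC s = 1)
    (hsize : ∀ s, nT s + nC s = #(mSet m s)) (s : S) : #(mSet m s) = 2 := by
  rw [← hsize s, (hpair s).1, (hpair s).2]

lemma eq_two_mul_card_of_pair [Fintype S] (hpair : ∀ s, nT s = 1 ∧ nC s = 1)
    (hsize : ∀ s, nT s + nC s = #(mSet m s)) : (n : ℝ) = 2 * Fintype.card S := by
  have h := sum_sum_mSet (m := m) fun _ => (1 : ℝ)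
  simp only [sum_const, card_mSet_of_pair hpair hsize, card_univ, Fintype.card_fin,
    nsmul_eq_mul, mul_one] at h
  rw [← h]
  push_cast
  ring

lemma tdiff_of_pair {s : S} (hT : nT s = 1) (hC : nC s = 1) (v z : Fin n → ℝ) :
    tdiff m nT nC v z s = ∑ i ∈ mSet m s, v i * (2 * z i - 1) := by
  simp only [tdiff, hT, hC, Nat.cast_one, div_one, one_mul, ← sum_sub_distrib]
  exact sum_congr rfl fun i _ => by ring

lemma tauM_of_pair [Fintype S] (hpair : ∀ s, nT s = 1 ∧ nC s = 1) (v z : Fin n → ℝ) :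
    tauM m nT nC v z = (∑ i, v i * (2 * z i - 1)) / Fintype.card S := by
  simp only [tauM, w_of_pair hpair, tdiff_of_pair (hpair _).1 (hpair _).2, ← mul_sum,
    sum_sum_mSet]
  ring

section Assignment

variable {Ω : Type*} [MeasurableSpace Ω] {μ : Measure Ω} {Z : Ω → Fin n → ℝ}

lemma integral_eq_Pr (hZmeas : ∀ i, Measurable fun ω => Z ω i)
    (hZ01 : ∀ ω i, Z ω i = 0 ∨ Z ω i = 1) (i : Fin n) :
    ∫ ω, Z ω i ∂μ = Pr μ Z i :=
  integral_of_zero_or_one (hZmeas i) (fun ω => hZ01 ω i)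

lemma sum_Pr_mSet [IsProbabilityMeasure μ]
    (hZmeas : ∀ i, Measurable fun ω => Z ω i) (hZ01 : ∀ ω i, Z ω i = 0 ∨ Z ω i = 1)
    (hZsum : ∀ᵐ ω ∂μ, ∀ s, ∑ i ∈ mSet m s, Z ω i = (nT s : ℝ)) (s : S) :
    ∑ i ∈ mSet m s, Pr μ Z i = nT s := by
  have hint : ∀ i ∈ mSet m s, Integrable (fun ω => Z ω i) μ := fun i _ =>
    integrable_of_zero_or_one (hZmeas i) (fun ω => hZ01 ω i)
  rw [← sum_congr rfl fun i _ => integral_eq_Pr hZmeas hZ01 i,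
    ← integral_finsetSum _ hint, integral_congr_ae (hZsum.mono fun ω hω => hω s)]
  simp

lemma bias_rebar_of_pair [Fintype S] [IsProbabilityMeasure μ]
    (hpair : ∀ s, nT s = 1 ∧ nC s = 1) (hZmeas : ∀ i, Measurable fun ω => Z ω i)
    (hZ01 : ∀ ω i, Z ω i = 0 ∨ Z ω i = 1) (yT yC yhat : Fin n → ℝ) :
    (∫ ω, tauM m nT nC (fun i => Yobs yT yC (Z ω) i - yhat i) (Z ω) ∂μ)
        - tauETT μ Z yT yC nT
      = (∑ i, (2 * Pr μ Z i - 1) * (yC i - yhat i)) / Fintype.card S := by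
  have hpoint : ∀ ω, tauM m nT nC (fun i => Yobs yT yC (Z ω) i - yhat i) (Z ω)
      = (∑ i, (Z ω i * (yT i + yC i - 2 * yhat i) - (yC i - yhat i))) / Fintype.card S := by
    intro ω
    rw [tauM_of_pair hpair]
    congr 1
    refine sum_congr rfl fun i _ => ?_
    rcases hZ01 ω i with h | h <;> simp only [Yobs, h] <;> ring
  have hint : ∀ i, Integrable (fun ω => Z ω i) μ := fun i =>
    integrable_of_zero_or_one (hZmeas i) (fun ω => hZ01 ω i)
  have hsummand : ∀ i ∈ (univ : Finset (Fin n)), Integrable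
      (fun ω => Z ω i * (yT i + yC i - 2 * yhat i) - (yC i - yhat i)) μ := fun i _ =>
    ((hint i).mul_const _).sub (integrable_const _)
  simp_rw [hpoint]
  rw [integral_div, integral_finsetSum _ hsummand]
  simp_rw [integral_sub ((hint _).mul_const _) (integrable_const _), integral_mul_const,
    integral_eq_Pr hZmeas hZ01, integral_const, probReal_univ, one_smul]
  simp only [tauETT, nTtot, hpair, sum_const, card_univ, smul_eq_mul, mul_one, ← sub_div,
    ← sum_sub_distrib]
  congr 1
  exact sum_congr rfl fun i _ => by ring

end Assignment

lemma two_mul_sub_one_le_of_odds_le {p Γ : ℝ} (hp1 : p < 1)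
    (h : p * p / ((1 - p) * (1 - p)) ≤ Γ) : 2 * p - 1 ≤ (√Γ - 1) / (√Γ + 1) := by
  have hq : 0 < 1 - p := by linarith
  have hodds : p / (1 - p) ≤ √Γ :=
    (le_abs_self _).trans (Real.abs_le_sqrt (by rwa [div_pow, sq, sq]))
  rw [div_le_iff₀ hq] at hodds
  rw [le_div_iff₀ (by positivity)]
  nlinarith

lemma sq_two_mul_sub_one_le_of_odds_le {p Γ : ℝ} (hp0 : 0 < p) (hp1 : p < 1)
    (h : p * p / ((1 - p) * (1 - p)) ≤ Γ) (h' : (1 - p) * (1 - p) / (p * p) ≤ Γ) :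
    (2 * p - 1) ^ 2 ≤ (√Γ - 1) / (√Γ + 1) := by
  have hupper := two_mul_sub_one_le_of_odds_le hp1 h
  have hlower := two_mul_sub_one_le_of_odds_le (p := 1 - p) (Γ := Γ) (by linarith)
    (by rwa [sub_sub_cancel])
  calc (2 * p - 1) ^ 2 = |2 * p - 1| * |2 * p - 1| := by rw [sq, abs_mul_abs_self]
    _ ≤ (√Γ - 1) / (√Γ + 1) * 1 :=
        mul_le_mul (abs_le.2 ⟨by linarith, hupper⟩) (abs_le.2 ⟨by linarith, by linarith⟩)
          (abs_nonneg _) ((abs_nonneg _).trans (abs_le.2 ⟨by linarith, hupper⟩))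
    _ = (√Γ - 1) / (√Γ + 1) := mul_one _

section PairBound

variable {P d : Fin n → ℝ} {Γ : ℝ}

lemma sq_sum_mSet_le {s : S} (hcard : #(mSet m s) = 2) (hsum : ∑ i ∈ mSet m s, P i = 1)
    (hodds : ∀ i j, i ≠ j → m i = m j →
      0 < P i ∧ P i < 1 ∧ P i * (1 - P j) / (P j * (1 - P i)) ≤ Γ) :
    (∑ i ∈ mSet m s, (2 * P i - 1) * d i) ^ 2
      ≤ 2 * ((√Γ - 1) / (√Γ + 1)) * ∑ i ∈ mSet m s, d i ^ 2 := by
  obtain ⟨i, j, hij, hs⟩ := card_eq_two.1 hcard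
  have hm : m i = m j := by
    have hi : i ∈ mSet m s := by simp [hs]
    have hj : j ∈ mSet m s := by simp [hs]
    simp only [mSet, mem_filter] at hi hj
    rw [hi.2, hj.2]
  rw [hs, sum_pair hij] at hsum ⊢
  rw [sum_pair hij]
  obtain ⟨hi0, hi1, hi⟩ := hodds i j hij hm
  obtain ⟨-, -, hj⟩ := hodds j i hij.symm hm.symm
  have hPj : P j = 1 - P i := by linarith
  rw [hPj, sub_sub_cancel] at hi hj
  rw [hPj]
  have ha := sq_two_mul_sub_one_le_of_odds_le hi0 hi1 hi hj
  nlinarith [mul_nonneg (sub_nonneg.2 ha) (sq_nonneg (d i - d j)),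
    mul_nonneg ((sq_nonneg _).trans ha) (sq_nonneg (d i + d j))]

lemma sq_sum_le_of_pair [Fintype S] (hpair : ∀ s, nT s = 1 ∧ nC s = 1)
    (hsize : ∀ s, nT s + nC s = #(mSet m s)) (hsum : ∀ s, ∑ i ∈ mSet m s, P i = 1)
    (hodds : ∀ i j, i ≠ j → m i = m j →
      0 < P i ∧ P i < 1 ∧ P i * (1 - P j) / (P j * (1 - P i)) ≤ Γ) :
    (∑ i, (2 * P i - 1) * d i) ^ 2
      ≤ Fintype.card S * (2 * ((√Γ - 1) / (√Γ + 1)) * ∑ i, d i ^ 2) :=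
  calc (∑ i, (2 * P i - 1) * d i) ^ 2
      = (∑ s, ∑ i ∈ mSet m s, (2 * P i - 1) * d i) ^ 2 := by rw [sum_sum_mSet]
    _ ≤ Fintype.card S * ∑ s, (∑ i ∈ mSet m s, (2 * P i - 1) * d i) ^ 2 :=
        sq_sum_le_card_mul_sum_sq
    _ ≤ Fintype.card S * ∑ s, 2 * ((√Γ - 1) / (√Γ + 1)) * ∑ i ∈ mSet m s, d i ^ 2 :=
        mul_le_mul_of_nonneg_left (sum_le_sum fun s _ =>
          sq_sum_mSet_le (card_mSet_of_pair hpair hsize s) (hsum s) hodds) (Nat.cast_nonneg _)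
    _ = Fintype.card S * (2 * ((√Γ - 1) / (√Γ + 1)) * ∑ i, d i ^ 2) := by
        rw [← mul_sum, sum_sum_mSet]

end PairBound

lemma sq_div_div_le_of_sq_le {B k D V l : ℝ} (hk : 0 < k) (hV : 0 ≤ V)
    (hB : B ^ 2 ≤ k * (2 * l * D)) : (B / k) ^ 2 / (1 / (2 * k) * V) ≤ D / V * (4 * l) := by
  rw [one_div, ← div_eq_inv_mul, div_div_eq_mul_div, div_mul_eq_mul_div]
  refine div_le_div_of_nonneg_right ?_ hV
  rw [div_pow, div_mul_eq_mul_div, div_le_iff₀ (by positivity)]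
  nlinarith

end Rebar

theorem stmt19_general {n : ℕ} {S : Type*} [Fintype S] [DecidableEq S] [Nonempty S]
    (m : Fin n → S) (nT nC : S → ℕ)
    (hsize : ∀ s, nT s + nC s = (Rebar.mSet m s).card)
    {Ω : Type*} [MeasurableSpace Ω] (μ : Measure Ω) [IsProbabilityMeasure μ]
    (Z : Ω → Fin n → ℝ)
    (hZmeas : ∀ i, Measurable fun ω => Z ω i)
    (hZ01 : ∀ ω i, Z ω i = 0 ∨ Z ω i = 1)
    (hZsum : ∀ᵐ ω ∂μ, ∀ s, ∑ i ∈ Rebar.mSet m s, Z ω i = (nT s : ℝ))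
    (hpair : ∀ s, nT s = 1 ∧ nC s = 1)
    (Γ : ℝ)
    (hsens : ∀ i j : Fin n, i ≠ j → m i = m j →
      0 < Rebar.Pr μ Z i ∧ Rebar.Pr μ Z i < 1 ∧
      0 < Rebar.Pr μ Z j ∧ Rebar.Pr μ Z j < 1 ∧
      1 / Γ ≤ (Rebar.Pr μ Z i * (1 - Rebar.Pr μ Z j))
                / (Rebar.Pr μ Z j * (1 - Rebar.Pr μ Z i)) ∧
      (Rebar.Pr μ Z i * (1 - Rebar.Pr μ Z j))
                / (Rebar.Pr μ Z j * (1 - Rebar.Pr μ Z i)) ≤ Γ)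
    (yT yC yhat : Fin n → ℝ) :
    (((∫ ω, Rebar.tauM m nT nC
            (fun i => Rebar.Yobs yT yC (Z ω) i - yhat i) (Z ω) ∂μ)
          - Rebar.tauETT μ Z yT yC nT)
        / Real.sqrt ((1 / (n : ℝ)) *
            ∑ i, (yC i - (1 / (n : ℝ)) * ∑ j, yC j) ^ 2)) ^ 2
      ≤ (1 - (1 - (∑ i, (yC i - yhat i) ^ 2)
                    / ∑ i, (yC i - (1 / (n : ℝ)) * ∑ j, yC j) ^ 2))
          * (4 * (Real.sqrt Γ - 1) / (Real.sqrt Γ + 1)) := by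
  have hsum : ∀ s, ∑ i ∈ Rebar.mSet m s, Rebar.Pr μ Z i = 1 := fun s => by
    rw [Rebar.sum_Pr_mSet hZmeas hZ01 hZsum s, (hpair s).1, Nat.cast_one]
  have hbias := Rebar.sq_sum_le_of_pair (d := fun i => yC i - yhat i) hpair hsize hsum
    fun i j hij hm => ⟨(hsens i j hij hm).1, (hsens i j hij hm).2.1,
      (hsens i j hij hm).2.2.2.2.2⟩
  rw [Rebar.bias_rebar_of_pair hpair hZmeas hZ01, div_pow, Real.sq_sqrt (by positivity),
    Rebar.eq_two_mul_card_of_pair hpair hsize, sub_sub_cancel, mul_div_assoc]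
  exact Rebar.sq_div_div_le_of_sq_le (by positivity) (by positivity) hbias

/-- Proposition 4, R² form: in a pair-matching design under the
odds-ratio sensitivity condition at level Γ, with nondegenerate control
potential outcomes,
`((E[τ̂_rebar] - τ_ETT)/SD(y_C))² ≤ (1 - R²_M) · 4(√Γ - 1)/(√Γ + 1)`. -/
theorem stmt19 {n : ℕ} {S : Type*} [Fintype S] [DecidableEq S] [Nonempty S]
    (m : Fin n → S) (nT nC : S → ℕ)
    (hT : ∀ s, 0 < nT s) (hC : ∀ s, 0 < nC s)
    (hsize : ∀ s, nT s + nC s = (Rebar.mSet m s).card)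
    {Ω : Type*} [MeasurableSpace Ω] (μ : Measure Ω) [IsProbabilityMeasure μ]
    (Z : Ω → Fin n → ℝ)
    (hZmeas : ∀ i, Measurable fun ω => Z ω i)
    (hZ01 : ∀ ω i, Z ω i = 0 ∨ Z ω i = 1)
    (hZsum : ∀ᵐ ω ∂μ, ∀ s, ∑ i ∈ Rebar.mSet m s, Z ω i = (nT s : ℝ))
    (hpair : ∀ s, nT s = 1 ∧ nC s = 1)
    (Γ : ℝ) (hΓ : 1 ≤ Γ)
    (hsens : ∀ i j : Fin n, i ≠ j → m i = m j →
      0 < Rebar.Pr μ Z i ∧ Rebar.Pr μ Z i < 1 ∧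
      0 < Rebar.Pr μ Z j ∧ Rebar.Pr μ Z j < 1 ∧
      1 / Γ ≤ (Rebar.Pr μ Z i * (1 - Rebar.Pr μ Z j))
                / (Rebar.Pr μ Z j * (1 - Rebar.Pr μ Z i)) ∧
      (Rebar.Pr μ Z i * (1 - Rebar.Pr μ Z j))
                / (Rebar.Pr μ Z j * (1 - Rebar.Pr μ Z i)) ≤ Γ)
    (yT yC yhat : Fin n → ℝ)
    (hvar : 0 < ∑ i, (yC i - (1 / (n : ℝ)) * ∑ j, yC j) ^ 2) :
    (((∫ ω, Rebar.tauM m nT nC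
            (fun i => Rebar.Yobs yT yC (Z ω) i - yhat i) (Z ω) ∂μ)
          - Rebar.tauETT μ Z yT yC nT)
        / Real.sqrt ((1 / (n : ℝ)) *
            ∑ i, (yC i - (1 / (n : ℝ)) * ∑ j, yC j) ^ 2)) ^ 2
      ≤ (1 - (1 - (∑ i, (yC i - yhat i) ^ 2)
                    / ∑ i, (yC i - (1 / (n : ℝ)) * ∑ j, yC j) ^ 2))
          * (4 * (Real.sqrt Γ - 1) / (Real.sqrt Γ + 1)) :=
  stmt19_general m nT nC hsize μ Z hZmeas hZ01 hZsum hpair Γ hsens yT yC yhat
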